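/- For n ≥ 2, define on ℝ^{2n} the quadratic forms q_j(x,ξ) = x₁² + ξ₁² + i(ξ₁² + x_{j+1}ξ₁) and q̃_j(x,ξ) = x₁² + ξ₁² + i(ξ₁² + ξ_{j+1}ξ₁), for 1 ≤ j ≤ n−1. For real numbers λ_j, λ̃_j ≥ 0 with Σ_j(λ_j + λ̃_j) > 0, the singular space S of the quadratic form q = Σ_{j=1}^{n−1}(λ_j q_j + λ̃_j q̃_j), defined as S = ⋂_{j≥0} Ker(Re F (Im F)^j) ∩ ℝ^{2n} where F is the Hamilton map of q, equals {(x,ξ) ∈ ℝ^{2n} : x₁ = ξ₁ = Σ_{j=1}^{n−1}(λ_j x_{j+1} + λ̃_j ξ_{j+1}) = 0}; in particular S ≠ {0}. -/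
import Mathlib


/-- The phase space `ℝ^n × ℝ^n ≅ ℝ^{2n}`. -/
abbrev PS (n : ℕ) := (Fin n → ℝ) × (Fin n → ℝ)

/-- The canonical symplectic form `σ((x,ξ),(y,η)) = ξ·y − x·η` on `ℝ^{2n}`. -/
noncomputable def symp (n : ℕ) (X Y : PS n) : ℝ :=
  (∑ i, X.2 i * Y.1 i) - ∑ i, X.1 i * Y.2 i

lemma symp_e2 (n : ℕ) (j : Fin n) (Z : PS n) :
    symp n ((0 : Fin n → ℝ), Pi.single j 1) Z = Z.1 j := by
  simp [symp, Pi.single_apply, ite_mul, Finset.sum_ite_eq']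

lemma symp_e1 (n : ℕ) (j : Fin n) (Z : PS n) :
    symp n (Pi.single j 1, (0 : Fin n → ℝ)) Z = -Z.2 j := by
  simp [symp, Pi.single_apply, ite_mul, Finset.sum_ite_eq']

lemma symp_nondeg (n : ℕ) (Z : PS n) (h : ∀ W, symp n W Z = 0) : Z = 0 := by
  ext j
  · have := h ((0 : Fin n → ℝ), Pi.single j 1); rw [symp_e2] at this; simpa using this
  · have h2 := h (Pi.single j 1, (0 : Fin n → ℝ)); rw [symp_e1] at h2
    have : Z.2 j = 0 := by linarith
    simpa using this

/-- for `n ≥ 2` consider, on `ℝ^{2n}`,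
`q = Σ_{j=1}^{n−1}(λ_j q_j + λ̃_j q̃_j)` with
`q_j = x₁²+ξ₁²+i(ξ₁²+x_{j+1}ξ₁)`, `q̃_j = x₁²+ξ₁²+i(ξ₁²+ξ_{j+1}ξ₁)`,
`λ_j, λ̃_j ≥ 0` and `Σ(λ_j+λ̃_j) > 0`. Here coordinates `x_{j+1}, ξ_{j+1}` are the
components of index `j ≠ 0` (0-based), `lam`/`mu` encode `λ`/`λ̃`, and `Bre`, `BIm`
are the polarized forms of `Re q`, `Im q` with Hamilton maps `Re F`, `Im F`.
The singular space `S = ⋂_{k≥0} Ker(Re F (Im F)^k)` equals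
`{(x,ξ) : x₁ = ξ₁ = Σ_j (λ_j x_{j+1} + λ̃_j ξ_{j+1}) = 0}`; in particular `S ≠ {0}`. -/
theorem example_singular_space (n : ℕ) (hn : 2 ≤ n)
    (lam mu : Fin n → ℝ)
    (hlam : ∀ i, 0 ≤ lam i) (hmu : ∀ i, 0 ≤ mu i)
    (hsum : 0 < ∑ i ∈ Finset.univ.erase (⟨0, by omega⟩ : Fin n), (lam i + mu i))
    (Bre BIm : PS n →ₗ[ℝ] PS n →ₗ[ℝ] ℝ)
    (hBre : ∀ X Y : PS n, Bre X Y =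
      (∑ i ∈ Finset.univ.erase (⟨0, by omega⟩ : Fin n), (lam i + mu i)) *
        (X.1 ⟨0, by omega⟩ * Y.1 ⟨0, by omega⟩ + X.2 ⟨0, by omega⟩ * Y.2 ⟨0, by omega⟩))
    (hBIm : ∀ X Y : PS n, BIm X Y =
      (∑ i ∈ Finset.univ.erase (⟨0, by omega⟩ : Fin n), (lam i + mu i)) *
          (X.2 ⟨0, by omega⟩ * Y.2 ⟨0, by omega⟩) +
        ((∑ i ∈ Finset.univ.erase (⟨0, by omega⟩ : Fin n),
            (lam i * X.1 i + mu i * X.2 i)) * Y.2 ⟨0, by omega⟩ +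
          (∑ i ∈ Finset.univ.erase (⟨0, by omega⟩ : Fin n),
            (lam i * Y.1 i + mu i * Y.2 i)) * X.2 ⟨0, by omega⟩) / 2)
    (ReF ImF : Module.End ℝ (PS n))
    (hReF : ∀ X Y, Bre X Y = symp n X (ReF Y))
    (hImF : ∀ X Y, BIm X Y = symp n X (ImF Y)) :
    ({X : PS n | ∀ k : ℕ, ReF ((ImF ^ k) X) = 0}
      = {X : PS n | X.1 ⟨0, by omega⟩ = 0 ∧ X.2 ⟨0, by omega⟩ = 0 ∧
          (∑ i ∈ Finset.univ.erase (⟨0, by omega⟩ : Fin n),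
            (lam i * X.1 i + mu i * X.2 i)) = 0})
    ∧ ∃ X : PS n, (∀ k : ℕ, ReF ((ImF ^ k) X) = 0) ∧ X ≠ 0 := by
  have h0 : (0 : ℕ) < n := by omega
  set e0 : Fin n := ⟨0, h0⟩ with he0
  set c : ℝ := ∑ i ∈ Finset.univ.erase e0, (lam i + mu i) with hc
  set L : PS n → ℝ := fun X => ∑ i ∈ Finset.univ.erase e0, (lam i * X.1 i + mu i * X.2 i)
    with hL
  have hcpos : 0 < c := hsum
  have key1 : ∀ Z : PS n, ReF Z = 0 ↔ Z.1 e0 = 0 ∧ Z.2 e0 = 0 := by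
    intro Z
    constructor
    · intro hz
      have hall : ∀ W, Bre W Z = 0 := by
        intro W; rw [hReF W Z, hz]; simp [symp]
      constructor
      · have h1 := hall ((Pi.single e0 1 : Fin n → ℝ), 0)
        rw [hBre] at h1
        simp only [Pi.single_eq_same] at h1
        have h2 : c * Z.1 e0 = 0 := by simpa using h1
        exact (mul_eq_zero.mp h2).resolve_left (ne_of_gt hcpos)
      · have h1 := hall ((0 : Fin n → ℝ), Pi.single e0 1)
        rw [hBre] at h1
        simp only [Pi.single_eq_same] at h1
        have h2 : c * Z.2 e0 = 0 := by simpa using h1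
        exact (mul_eq_zero.mp h2).resolve_left (ne_of_gt hcpos)
    · rintro ⟨h1, h2⟩
      apply symp_nondeg
      intro W
      rw [← hReF W Z, hBre, h1, h2]
      ring
  have key2 : ∀ Z : PS n, Z.2 e0 = 0 → L Z = 0 → ImF Z = 0 := by
    intro Z h1 h2
    apply symp_nondeg
    intro W
    rw [← hImF W Z, hBIm, h1]
    have h2' : (∑ i ∈ Finset.univ.erase e0, (lam i * Z.1 i + mu i * Z.2 i)) = 0 := h2
    rw [h2']
    ring
  have key3a : ∀ Z : PS n, (ImF Z).1 e0 = c * Z.2 e0 + L Z / 2 := by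
    intro Z
    have h := hImF ((0 : Fin n → ℝ), (Pi.single e0 1 : Fin n → ℝ)) Z
    rw [symp_e2] at h
    rw [← h, hBIm]
    have hz : ∀ i ∈ Finset.univ.erase e0,
        lam i * ((0 : Fin n → ℝ), (Pi.single e0 1 : Fin n → ℝ)).1 i
          + mu i * ((0 : Fin n → ℝ), (Pi.single e0 1 : Fin n → ℝ)).2 i = 0 := by
      intro i hi
      have hne := Finset.ne_of_mem_erase hi
      simp [Pi.single_eq_of_ne hne]
    rw [Finset.sum_eq_zero hz]
    simp only [Pi.single_eq_same, hL]
    ring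
  have key3b : ∀ Z : PS n, (ImF Z).2 e0 = 0 := by
    intro Z
    have h := hImF ((Pi.single e0 1 : Fin n → ℝ), (0 : Fin n → ℝ)) Z
    rw [symp_e1] at h
    rw [hBIm] at h
    have hz : ∀ i ∈ Finset.univ.erase e0,
        lam i * ((Pi.single e0 1 : Fin n → ℝ), (0 : Fin n → ℝ)).1 i
          + mu i * ((Pi.single e0 1 : Fin n → ℝ), (0 : Fin n → ℝ)).2 i = 0 := by
      intro i hi
      have hne := Finset.ne_of_mem_erase hi
      simp [Pi.single_eq_of_ne hne]
    rw [Finset.sum_eq_zero hz] at h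
    simp only [Pi.zero_apply] at h
    have h' : -(ImF Z).2 e0 = 0 := by rw [← h]; ring
    linarith
  have hset : ({X : PS n | ∀ k : ℕ, ReF ((ImF ^ k) X) = 0}
      = {X : PS n | X.1 e0 = 0 ∧ X.2 e0 = 0 ∧ L X = 0}) := by
    ext X
    simp only [Set.mem_setOf_eq]
    constructor
    · intro h
      have h00 := h 0
      rw [pow_zero, Module.End.one_apply] at h00
      obtain ⟨h1, h2⟩ := (key1 X).mp h00
      refine ⟨h1, h2, ?_⟩
      have h11 := h 1
      rw [pow_one] at h11
      have h12 := ((key1 (ImF X)).mp h11).1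
      rw [key3a X, h2] at h12
      linarith
    · rintro ⟨h1, h2, h3⟩
      intro k
      cases k with
      | zero =>
        rw [pow_zero, Module.End.one_apply]
        exact (key1 X).mpr ⟨h1, h2⟩
      | succ k =>
        rw [pow_succ, Module.End.mul_apply, key2 X h2 h3, map_zero, map_zero]
  have hmemiff : ∀ X : PS n, (∀ k : ℕ, ReF ((ImF ^ k) X) = 0)
      ↔ (X.1 e0 = 0 ∧ X.2 e0 = 0 ∧ L X = 0) := by
    intro X
    have h := Set.ext_iff.mp hset X
    simpa only [Set.mem_setOf_eq] using h
  constructor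
  · exact hset
  · have h1n : (1 : ℕ) < n := by omega
    set e1 : Fin n := ⟨1, h1n⟩ with he1
    have hne : e1 ≠ e0 := by simp [he1, he0, Fin.ext_iff]
    have hmem : e1 ∈ Finset.univ.erase e0 := Finset.mem_erase.mpr ⟨hne, Finset.mem_univ _⟩
    by_cases hl : lam e1 = 0
    · refine ⟨((Pi.single e1 1 : Fin n → ℝ), 0), ?_, ?_⟩
      · rw [hmemiff]
        refine ⟨by simp [Pi.single_eq_of_ne hne.symm], by simp, ?_⟩
        show (∑ i ∈ Finset.univ.erase e0,
          (lam i * (Pi.single e1 1 : Fin n → ℝ) i + mu i * (0 : Fin n → ℝ) i)) = 0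
        apply Finset.sum_eq_zero
        intro i hi
        by_cases hie : i = e1
        · subst hie; simp [hl]
        · simp [Pi.single_eq_of_ne hie]
      · intro hcon
        have h1 : (Pi.single e1 1 : Fin n → ℝ) e1 = 0 := by
          rw [show (Pi.single e1 1 : Fin n → ℝ) = 0 from congrArg Prod.fst hcon]; simp
        simp at h1
    · refine ⟨((Pi.single e1 (mu e1) : Fin n → ℝ),
        (Pi.single e1 (-lam e1) : Fin n → ℝ)), ?_, ?_⟩
      · rw [hmemiff]
        refine ⟨by simp [Pi.single_eq_of_ne hne.symm], by simp [Pi.single_eq_of_ne hne.symm], ?_⟩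
        show (∑ i ∈ Finset.univ.erase e0,
          (lam i * (Pi.single e1 (mu e1) : Fin n → ℝ) i
            + mu i * (Pi.single e1 (-lam e1) : Fin n → ℝ) i)) = 0
        apply Finset.sum_eq_zero
        intro i hi
        by_cases hie : i = e1
        · subst hie; simp; ring
        · simp [Pi.single_eq_of_ne hie]
      · intro hcon
        have h1 : (Pi.single e1 (-lam e1) : Fin n → ℝ) e1 = 0 := by
          rw [show (Pi.single e1 (-lam e1) : Fin n → ℝ) = 0 from congrArg Prod.snd hcon]
          simp
        simp at h1
        exact hl h1
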